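/- For any a ∈ (−∞,s), let b = 𝔱(a) ∈ (−∞,s). Then B′(b) − B′₋(b) ≤ 0 and B′₊(b) − B′(b) ≥ 0, where B′₋(b), B′₊(b) denote the one-sided limits of B′ at b taken within (−∞,s]; in particular B′(b) = min{B′(b), B′₋(b), B′₊(b)}. Moreover, for b = s = 𝔱(−∞), B′(s) − B′₋(s) ≤ 0. -/

import Mathlib

/-!
Islands (Section 3.3 of the paper).  `R` is a useful function with `max R(x) = R(x)` for all
`x`, `s ∈ ℝ`, and `R(-∞) = Rinf` is a fixed value with `R(z) ≤ Rinf` for all `z < s`.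
A (red) island in `K = [-∞, s)` is an open interval `(x, y) ⊆ K` (with `x = -∞` allowed,
encoded by `⊥ : EReal`) as in the definition below.  Lemma 3.4 of the paper:  `z ∈ (-∞, s)`
lies in the interior of an island iff `R(z) < R(y)` for some `y ∈ (z, s)`.
-/

noncomputable section

open Filter Topology

/-- `Δx⁻`, the indicator function of `[x, ∞)`. -/
def deltaMinus (x : ℝ) : ℝ → ℝ := Set.indicator (Set.Ici x) 1

/-- `Δx⁺`, the indicator function of `(x, ∞)`. -/
def deltaPlus (x : ℝ) : ℝ → ℝ := Set.indicator (Set.Ioi x) 1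

/-- `F` is a useful function, with decomposition data `f` (continuous of bounded variation)
and coefficient families `um = (u_x⁻)`, `up = (u_x⁺)`. -/
structure IsUseful (F f um up : ℝ → ℝ) : Prop where
  cont : Continuous f
  bddVar : BoundedVariationOn f Set.univ
  summable_um : Summable fun x : ℝ => |um x|
  summable_up : Summable fun x : ℝ => |up x|
  decomp : ∀ t : ℝ,
    F t = f t + (∑' x : ℝ, um x * deltaMinus x t) + (∑' x : ℝ, up x * deltaPlus x t)

/-- `max R (x) = R x` for every `x`, i.e. both one-sided limits are `≤ R x`. -/
def MaxEqSelf (R : ℝ → ℝ) : Prop :=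
  ∀ a : ℝ, Function.leftLim R a ≤ R a ∧ Function.rightLim R a ≤ R a

/-- The value of `R` at a point of `[-∞, ∞)`, where `R(-∞) = Rinf`. -/
def Rval (R : ℝ → ℝ) (Rinf : ℝ) (x : EReal) : ℝ :=
  if x = ⊥ then Rinf else R x.toReal

/-- `(x, y)` is a (red) island in `K = [-∞, s)`:  either
(i) `y = s`, `R(x) ≥ R₋(s)` and `R(z) < R₋(s)` for all `z ∈ (x, s)`; or
(ii) `y < s`, `R(x) ≥ R(y) ≥ R₋(s)`, `R(z) < R(y)` for all `z ∈ (x, y)`, and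
`R(w) ≤ R(y)` for all `w ∈ (y, s)`. -/
def IsIsland (R : ℝ → ℝ) (Rinf s : ℝ) (x y : EReal) : Prop :=
  x < y ∧
  ((y = (s : EReal) ∧ Function.leftLim R s ≤ Rval R Rinf x ∧
      ∀ z : ℝ, x < (z : EReal) → z < s → R z < Function.leftLim R s) ∨
   (∃ yr : ℝ, y = (yr : EReal) ∧ yr < s ∧
      R yr ≤ Rval R Rinf x ∧ Function.leftLim R s ≤ R yr ∧
      (∀ z : ℝ, x < (z : EReal) → (z : EReal) < y → R z < R yr) ∧
      (∀ w : ℝ, yr < w → w < s → R w ≤ R yr)))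


/-- The function `H : [-∞, s) → ℝ` flattening the islands of `R`:
`H(z) = R(y)` if `z ∈ (x, y]` for an island `(x, y)` with `y < s`; `H(z) = R₋(s)` if
`z ∈ (x, s)` for an island `(x, s)`; and `H(z) = R(z)` otherwise. -/
noncomputable def Hfun (R : ℝ → ℝ) (Rinf s : ℝ) (z : EReal) : ℝ := by
  classical
  exact
    if h : ∃ x y : EReal, IsIsland R Rinf s x y ∧ x < z ∧ z ≤ y ∧ y < (s : EReal) then
      R (h.choose_spec.choose).toReal
    else if ∃ x : EReal, IsIsland R Rinf s x (s : EReal) ∧ x < z ∧ z < (s : EReal) then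
      Function.leftLim R s
    else Rval R Rinf z

/-- The order-reversing map `𝔱(x) = tan(arctan s - arctan x - π/2)` interchanging
`K = [-∞, s)` and `K* = (-∞, s]`. -/
noncomputable def tmap (s x : ℝ) : ℝ :=
  Real.tan (Real.arctan s - Real.arctan x - Real.pi / 2)

/-- The extension of `𝔱` to `EReal`, with `𝔱(-∞) = s` and `𝔱(s) = -∞`. -/
noncomputable def tE (s : ℝ) (x : EReal) : EReal :=
  if x = ⊥ then ((s : ℝ) : EReal)
  else if x = ((s : ℝ) : EReal) then ⊥
  else ((tmap s x.toReal : ℝ) : EReal)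

/-- `H₊(z) = lim_{w → z⁺} H(w)` for `z ∈ [-∞, s)` (at `z = -∞` this is the limit of `H`
along `atBot`). -/
noncomputable def HplusE (R : ℝ → ℝ) (Rinf s : ℝ) (z : EReal) : ℝ :=
  if z = ⊥ then limUnder Filter.atBot (fun w : ℝ => Hfun R Rinf s (w : EReal))
  else Function.rightLim (fun w : ℝ => Hfun R Rinf s (w : EReal)) z.toReal

/-- `R̃ = H + H₊ - R` on `[-∞, s)` (the islands of `R` flipped up). -/
noncomputable def RtildeE (R : ℝ → ℝ) (Rinf s : ℝ) (z : EReal) : ℝ :=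
  Hfun R Rinf s z + HplusE R Rinf s z - Rval R Rinf z

/-- The new blue function `B'(z) = R̃(𝔱(z))` on `K* = (-∞, s]`. -/
noncomputable def Bprime (R : ℝ → ℝ) (Rinf s : ℝ) (z : ℝ) : ℝ :=
  RtildeE R Rinf s (tE s (z : EReal))

/-!
For `z < s` let `T(z) = max (R₋(s), sup_{(z,s)} R)` (`supWithLeftLim R s (Ioo z s)`).
Existence of one-sided limits together with `max R = R` makes `R` upper semicontinuous, so its
superlevel sets are closed and it attains its maximum on compact intervals. From this, `z < s`
lies in an island exactly when `R z < T z`, and the island's level is then `T z`; hence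
`H = max R T` on `(-∞, s)` and `H₊ = T`. Both `T` and `max R T` have right limit `T a` and left
limit `max (R a) (T a)` at `a`, so the one-sided limits of `R̃ = max R T + T - R` are explicit.
As `𝔱` reverses the order, `B'(𝔱 a) ≤ B'₋(𝔱 a)` becomes `max (R a) (T a) - R a ≤ T a - R₊(a)`,
and `B'(𝔱 a) ≤ B'₊(𝔱 a)` becomes `T a - R a ≤ max (R a) (T a) - R₋(a)`; both follow from
`R₊(a), R₋(a) ≤ R a` and `R₊(a) ≤ T a`. At `s`, with `C = T(-∞)`, one gets `B'(s) = C` and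
`B'₋(s) = 2C - lim_{-∞} R`, while `R ≤ C` on `(-∞, s)`.
-/

open Set Function

section UsefulFunctions

lemma abs_mul_indicator_one_le (u : ℝ) (S : Set ℝ) (t : ℝ) :
    |u * S.indicator 1 t| ≤ |u| := by
  by_cases ht : t ∈ S <;> simp [ht]

lemma IsUpperSet.monotone_indicator_one {S : Set ℝ} (hS : IsUpperSet S) :
    Monotone (S.indicator (1 : ℝ → ℝ)) := by
  intro a b hab
  by_cases ha : a ∈ S
  · simp [ha, hS hab ha]
  · simp only [indicator_of_notMem ha]
    exact indicator_nonneg (fun _ _ => zero_le_one) b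

variable {F : Filter ℝ}

lemma exists_tendsto_tsum_mul_indicator {u : ℝ → ℝ} (hu : Summable fun x => |u x|)
    {S : ℝ → Set ℝ} (hS : ∀ x, IsUpperSet (S x))
    (hF : ∀ g : ℝ → ℝ, Monotone g → BddBelow (range g) → ∃ c, Tendsto g F (𝓝 c)) :
    ∃ c, Tendsto (fun t => ∑' x, u x * (S x).indicator 1 t) F (𝓝 c) := by
  choose c hc using fun x => hF _ (hS x).monotone_indicator_one
    ⟨0, by rintro _ ⟨t, rfl⟩; exact indicator_nonneg (fun _ _ => zero_le_one) t⟩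
  exact ⟨_, tendsto_tsum_of_dominated_convergence hu (fun x => (hc x).const_mul (u x))
    (Eventually.of_forall fun t x => abs_mul_indicator_one_le _ _ _)⟩

variable {R f um up : ℝ → ℝ}

lemma IsUseful.exists_tendsto (h : IsUseful R f um up) (hf : ∃ c, Tendsto f F (𝓝 c))
    (hF : ∀ g : ℝ → ℝ, Monotone g → BddBelow (range g) → ∃ c, Tendsto g F (𝓝 c)) :
    ∃ c, Tendsto R F (𝓝 c) := by
  obtain ⟨c, hc⟩ := hf
  obtain ⟨cm, hcm⟩ := exists_tendsto_tsum_mul_indicator h.summable_um isUpperSet_Ici hF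
  obtain ⟨cp, hcp⟩ := exists_tendsto_tsum_mul_indicator h.summable_up isUpperSet_Ioi hF
  exact ⟨_, ((hc.add hcm).add hcp).congr fun t => (h.decomp t).symm⟩

lemma IsUseful.tendsto_leftLim (h : IsUseful R f um up) (a : ℝ) :
    Tendsto R (𝓝[<] a) (𝓝 (leftLim R a)) :=
  tendsto_leftLim_of_tendsto <| h.exists_tendsto
    ⟨_, h.cont.continuousAt.tendsto.mono_left nhdsWithin_le_nhds⟩
    fun _ hg _ => ⟨_, hg.tendsto_leftLim a⟩

lemma IsUseful.tendsto_rightLim (h : IsUseful R f um up) (a : ℝ) :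
    Tendsto R (𝓝[>] a) (𝓝 (rightLim R a)) :=
  tendsto_rightLim_of_tendsto <| h.exists_tendsto
    ⟨_, h.cont.continuousAt.tendsto.mono_left nhdsWithin_le_nhds⟩
    fun _ hg _ => ⟨_, hg.tendsto_rightLim a⟩

lemma IsUseful.exists_tendsto_atBot (h : IsUseful R f um up) : ∃ r, Tendsto R atBot (𝓝 r) :=
  h.exists_tendsto ⟨_, h.bddVar.tendsto_atBot_limUnder⟩
    fun _ hg hb => ⟨_, tendsto_atBot_ciInf hg hb⟩

end UsefulFunctions

lemma upperSemicontinuous_of_maxEqSelf {R : ℝ → ℝ}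
    (hL : ∀ a, Tendsto R (𝓝[<] a) (𝓝 (leftLim R a)))
    (hR : ∀ a, Tendsto R (𝓝[>] a) (𝓝 (rightLim R a))) (hmax : MaxEqSelf R) :
    UpperSemicontinuous R := by
  intro a c hc
  rw [← nhdsNE_sup_pure, ← nhdsLT_sup_nhdsGT]
  exact eventually_sup.2 ⟨eventually_sup.2
    ⟨(hL a).eventually (gt_mem_nhds ((hmax a).1.trans_lt hc)),
     (hR a).eventually (gt_mem_nhds ((hmax a).2.trans_lt hc))⟩, hc⟩

def supWithLeftLim (R : ℝ → ℝ) (s : ℝ) (I : Set ℝ) : ℝ := max (leftLim R s) (sSup (R '' I))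

section SupWithLeftLim

variable {R : ℝ → ℝ} {s c : ℝ} {I J : Set ℝ}

lemma bddAbove_image_Iio {Rinf : ℝ} (hRinf : ∀ z : ℝ, z < s → R z ≤ Rinf) :
    BddAbove (R '' Iio s) :=
  ⟨Rinf, forall_mem_image.2 hRinf⟩

lemma leftLim_le_supWithLeftLim : leftLim R s ≤ supWithLeftLim R s I := le_max_left _ _

lemma le_supWithLeftLim (hbdd : BddAbove (R '' Iio s)) (hI : I ⊆ Iio s) {w : ℝ} (hw : w ∈ I) :
    R w ≤ supWithLeftLim R s I :=
  (le_csSup (hbdd.mono (image_mono hI)) (mem_image_of_mem R hw)).trans (le_max_right _ _)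

lemma supWithLeftLim_le (hI : I.Nonempty) (hL : leftLim R s ≤ c) (h : ∀ w ∈ I, R w ≤ c) :
    supWithLeftLim R s I ≤ c :=
  max_le hL (csSup_le (hI.image R) (forall_mem_image.2 h))

lemma supWithLeftLim_mono (hbdd : BddAbove (R '' Iio s)) (hJ : J ⊆ Iio s) (hI : I.Nonempty)
    (hIJ : I ⊆ J) : supWithLeftLim R s I ≤ supWithLeftLim R s J :=
  supWithLeftLim_le hI leftLim_le_supWithLeftLim fun _ hw => le_supWithLeftLim hbdd hJ (hIJ hw)

lemma lt_leftLim_or_exists_lt_of_lt_supWithLeftLim (hI : I.Nonempty)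
    (hc : c < supWithLeftLim R s I) : c < leftLim R s ∨ ∃ w ∈ I, c < R w := by
  refine (lt_max_iff.1 hc).imp_right fun hc => ?_
  obtain ⟨_, ⟨w, hw, rfl⟩, hcw⟩ := exists_lt_of_lt_csSup (hI.image R) hc
  exact ⟨w, hw, hcw⟩

lemma tendsto_supWithLeftLim {ι : Type*} {F : Filter ι} {I : ι → Set ℝ}
    (hbdd : BddAbove (R '' Iio s)) (hJ : J ⊆ Iio s) (hJne : J.Nonempty)
    (hsub : ∀ᶠ i in F, (I i).Nonempty ∧ I i ⊆ J) (hexh : ∀ w ∈ J, ∀ᶠ i in F, w ∈ I i) :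
    Tendsto (fun i => supWithLeftLim R s (I i)) F (𝓝 (supWithLeftLim R s J)) := by
  refine tendsto_order.2 ⟨fun c hc => ?_, fun c hc => ?_⟩
  · rcases lt_leftLim_or_exists_lt_of_lt_supWithLeftLim hJne hc with hc | ⟨w, hw, hcw⟩
    · exact Eventually.of_forall fun i => hc.trans_le leftLim_le_supWithLeftLim
    · filter_upwards [hexh w hw, hsub] with i hwi hi
      exact hcw.trans_le (le_supWithLeftLim hbdd (hi.2.trans hJ) hwi)
  · filter_upwards [hsub] with i hi
    exact (supWithLeftLim_mono hbdd hJ hi.1 hi.2).trans_lt hc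

lemma tendsto_supWithLeftLim_Ioo_nhdsGT (hbdd : BddAbove (R '' Iio s)) {a : ℝ} (ha : a < s) :
    Tendsto (fun z => supWithLeftLim R s (Ioo z s)) (𝓝[>] a)
      (𝓝 (supWithLeftLim R s (Ioo a s))) := by
  refine tendsto_supWithLeftLim hbdd Ioo_subset_Iio_self (nonempty_Ioo.2 ha) ?_ fun w hw => ?_
  · filter_upwards [Ioo_mem_nhdsGT ha] with z hz
    exact ⟨nonempty_Ioo.2 hz.2, Ioo_subset_Ioo_left hz.1.le⟩
  · filter_upwards [Ioo_mem_nhdsGT hw.1] with z hz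
    exact ⟨hz.2, hw.2⟩

lemma tendsto_supWithLeftLim_Ioo_atBot (hbdd : BddAbove (R '' Iio s)) :
    Tendsto (fun z => supWithLeftLim R s (Ioo z s)) atBot (𝓝 (supWithLeftLim R s (Iio s))) := by
  refine tendsto_supWithLeftLim hbdd subset_rfl nonempty_Iio ?_ fun w hw => ?_
  · filter_upwards [eventually_lt_atBot s] with z hz
    exact ⟨nonempty_Ioo.2 hz, Ioo_subset_Iio_self⟩
  · filter_upwards [eventually_lt_atBot w] with z hz
    exact ⟨hz, hw⟩

lemma tendsto_supWithLeftLim_Ioo_nhdsLT (hbdd : BddAbove (R '' Iio s))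
    (husc : UpperSemicontinuous R) {a : ℝ} (ha : a < s) :
    Tendsto (fun z => supWithLeftLim R s (Ioo z s)) (𝓝[<] a)
      (𝓝 (max (R a) (supWithLeftLim R s (Ioo a s)))) := by
  set m := max (R a) (supWithLeftLim R s (Ioo a s))
  refine tendsto_order.2 ⟨fun c hc => ?_, fun c hc => ?_⟩
  · filter_upwards [self_mem_nhdsWithin] with z (hz : z < a)
    refine hc.trans_le (max_le (le_supWithLeftLim hbdd Ioo_subset_Iio_self ⟨hz, ha⟩) ?_)
    exact supWithLeftLim_mono hbdd Ioo_subset_Iio_self (nonempty_Ioo.2 ha)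
      (Ioo_subset_Ioo_left hz.le)
  · -- Upper semicontinuity gives `R < c'` near `a`; beyond that neighbourhood `R ≤ T(a) < c'`.
    obtain ⟨c', hmc', hc'c⟩ := exists_between hc
    obtain ⟨l, u, ⟨hla, hau⟩, hlu⟩ :=
      mem_nhds_iff_exists_Ioo_subset.1 (husc a c' ((le_max_left _ _).trans_lt hmc'))
    filter_upwards [Ioo_mem_nhdsLT hla] with z hz
    refine lt_of_le_of_lt (supWithLeftLim_le (nonempty_Ioo.2 (hz.2.trans ha))
      (leftLim_le_supWithLeftLim.trans ((le_max_right _ _).trans hmc'.le)) fun v hv => ?_) hc'c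
    rcases lt_or_ge v u with hvu | hvu
    · exact (hlu ⟨hz.1.trans hv.1, hvu⟩).le
    · exact (le_supWithLeftLim hbdd Ioo_subset_Iio_self ⟨hau.trans_le hvu, hv.2⟩).trans
        ((le_max_right _ _).trans hmc'.le)

end SupWithLeftLim

section Flattened

variable {R : ℝ → ℝ} {s : ℝ}

lemma tendsto_max_supWithLeftLim_Ioo_nhdsGT (hbdd : BddAbove (R '' Iio s)) {a : ℝ}
    (ha : a < s) :
    Tendsto (fun z => max (R z) (supWithLeftLim R s (Ioo z s))) (𝓝[>] a)
      (𝓝 (supWithLeftLim R s (Ioo a s))) := by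
  refine tendsto_of_tendsto_of_tendsto_of_le_of_le' (tendsto_supWithLeftLim_Ioo_nhdsGT hbdd ha)
    tendsto_const_nhds (Eventually.of_forall fun _ => le_max_right _ _) ?_
  filter_upwards [Ioo_mem_nhdsGT ha] with z hz
  exact max_le (le_supWithLeftLim hbdd Ioo_subset_Iio_self hz)
    (supWithLeftLim_mono hbdd Ioo_subset_Iio_self (nonempty_Ioo.2 hz.2)
      (Ioo_subset_Ioo_left hz.1.le))

lemma tendsto_max_supWithLeftLim_Ioo_atBot (hbdd : BddAbove (R '' Iio s)) :
    Tendsto (fun z => max (R z) (supWithLeftLim R s (Ioo z s))) atBot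
      (𝓝 (supWithLeftLim R s (Iio s))) := by
  refine tendsto_of_tendsto_of_tendsto_of_le_of_le' (tendsto_supWithLeftLim_Ioo_atBot hbdd)
    tendsto_const_nhds (Eventually.of_forall fun _ => le_max_right _ _) ?_
  filter_upwards [eventually_lt_atBot s] with z hz
  exact max_le (le_supWithLeftLim hbdd subset_rfl hz)
    (supWithLeftLim_mono hbdd subset_rfl (nonempty_Ioo.2 hz) Ioo_subset_Iio_self)

lemma tendsto_max_supWithLeftLim_Ioo_nhdsLT (hbdd : BddAbove (R '' Iio s))
    (husc : UpperSemicontinuous R) {a : ℝ} (ha : a < s) :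
    Tendsto (fun z => max (R z) (supWithLeftLim R s (Ioo z s))) (𝓝[<] a)
      (𝓝 (max (R a) (supWithLeftLim R s (Ioo a s)))) := by
  have hT := tendsto_supWithLeftLim_Ioo_nhdsLT hbdd husc ha
  refine tendsto_order.2 ⟨fun c hc => ?_, fun c hc => ?_⟩
  · filter_upwards [(tendsto_order.1 hT).1 c hc] with z hz using hz.trans_le (le_max_right _ _)
  · filter_upwards [(tendsto_order.1 hT).2 c hc,
      nhdsWithin_le_nhds (husc a c ((le_max_left _ _).trans_lt hc))] with z hTz hRz
    exact max_lt hRz hTz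

end Flattened

section Islands

variable {R : ℝ → ℝ} {s Rinf : ℝ}

lemma Rval_coe (z : ℝ) : Rval R Rinf z = R z := by
  simp [Rval]

lemma exists_le_apply_of_leftLim_lt_supWithLeftLim (husc : UpperSemicontinuous R)
    (hL : Tendsto R (𝓝[<] s) (𝓝 (leftLim R s))) {z : ℝ} (hz : z < s)
    (h : leftLim R s < supWithLeftLim R s (Ioo z s)) :
    ∃ w ∈ Ico z s, supWithLeftLim R s (Ioo z s) ≤ R w := by
  -- Near `s`, `R` stays below a level `c < T(z)`; on the compact rest it attains a maximum.
  obtain ⟨c, hLc, hcT⟩ := exists_between h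
  obtain ⟨l, hls, hl⟩ := mem_nhdsLT_iff_exists_Ioo_subset.1 ((tendsto_order.1 hL).2 c hLc)
  obtain ⟨w, hw, hwmax⟩ := (husc.upperSemicontinuousOn _).exists_isMaxOn
    (nonempty_Icc.2 (le_max_left z l)) isCompact_Icc
  have hws : w < s := hw.2.trans_lt (max_lt hz hls)
  refine ⟨w, ⟨hw.1, hws⟩, ?_⟩
  have hTle : supWithLeftLim R s (Ioo z s) ≤ max (R w) c := by
    refine supWithLeftLim_le (nonempty_Ioo.2 hz) (hLc.le.trans (le_max_right _ _)) fun v hv => ?_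
    rcases le_or_gt v (max z l) with hvl | hvl
    · exact (hwmax ⟨hv.1.le, hvl⟩).trans (le_max_left _ _)
    · exact (hl ⟨(le_max_right _ _).trans_lt hvl, hv.2⟩).le.trans (le_max_right _ _)
  exact (le_max_iff.1 hTle).resolve_right hcT.not_ge

lemma exists_left_endpoint (husc : UpperSemicontinuous R) {z M : ℝ} (hz : R z < M)
    (hM : M ≤ Rinf) :
    ∃ x : EReal, x < z ∧ M ≤ Rval R Rinf x ∧ ∀ v : ℝ, x < v → v ≤ z → R v < M := by
  set B := Iic z ∩ R ⁻¹' Ici M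
  have hB : ∀ v ≤ z, M ≤ R v → v ∈ B := fun v hvz hv => ⟨hvz, hv⟩
  rcases B.eq_empty_or_nonempty with hBe | hBne
  · refine ⟨⊥, EReal.bot_lt_coe z, by simpa [Rval] using hM, fun v _ hvz => ?_⟩
    exact lt_of_not_ge fun hv => hBe.subset (hB v hvz hv)
  · have hxB : sSup B ∈ B :=
      (isClosed_Iic.inter (husc.isClosed_preimage M)).csSup_mem hBne ⟨z, fun _ hv => hv.1⟩
    have hxz : sSup B < z := hxB.1.lt_of_ne fun h => (h ▸ hxB.2 : M ≤ R z).not_gt hz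
    refine ⟨(sSup B : ℝ), EReal.coe_lt_coe_iff.2 hxz, (Rval_coe _).symm ▸ hxB.2,
      fun v hxv hvz => ?_⟩
    exact lt_of_not_ge fun hv =>
      (EReal.coe_lt_coe_iff.1 hxv).not_ge (le_csSup ⟨z, fun _ hw => hw.1⟩ (hB v hvz hv))

lemma exists_first_le_apply (husc : UpperSemicontinuous R) {z w M : ℝ} (hz : R z < M)
    (hzw : z ≤ w) (hw : M ≤ R w) :
    ∃ y, z < y ∧ y ≤ w ∧ M ≤ R y ∧ ∀ v, z < v → v < y → R v < M := by
  set U := Ici z ∩ R ⁻¹' Ici M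
  have hUbdd : BddBelow U := ⟨z, fun _ hv => hv.1⟩
  have hyU : sInf U ∈ U :=
    (isClosed_Ici.inter (husc.isClosed_preimage M)).csInf_mem ⟨w, hzw, hw⟩ hUbdd
  refine ⟨sInf U, hyU.1.lt_of_ne fun h => (h ▸ hyU.2 : M ≤ R z).not_gt hz,
    csInf_le hUbdd ⟨hzw, hw⟩, hyU.2, fun v hzv hvy => ?_⟩
  exact lt_of_not_ge fun hv => hvy.not_ge (csInf_le hUbdd ⟨hzv.le, hv⟩)

lemma exists_island (husc : UpperSemicontinuous R) (hL : Tendsto R (𝓝[<] s) (𝓝 (leftLim R s)))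
    (hRinf : ∀ z : ℝ, z < s → R z ≤ Rinf) {z : ℝ} (hz : z < s)
    (hlt : R z < supWithLeftLim R s (Ioo z s)) :
    (∃ x y : EReal, IsIsland R Rinf s x y ∧ x < z ∧ (z : EReal) ≤ y ∧ y < s) ∨
      ∃ x : EReal, IsIsland R Rinf s x s ∧ x < z ∧ (z : EReal) < s := by
  set M := supWithLeftLim R s (Ioo z s)
  have hbdd : BddAbove (R '' Iio s) := bddAbove_image_Iio hRinf
  have hLM : leftLim R s ≤ M := leftLim_le_supWithLeftLim
  have hleM : ∀ w ∈ Ioo z s, R w ≤ M := fun w hw => le_supWithLeftLim hbdd Ioo_subset_Iio_self hw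
  have hMinf : M ≤ Rinf := supWithLeftLim_le (nonempty_Ioo.2 hz)
    (le_of_tendsto hL (eventually_nhdsWithin_of_forall hRinf)) fun w hw => hRinf w hw.2
  obtain ⟨x, hxz, hMx, hleft⟩ := exists_left_endpoint husc hlt hMinf
  by_cases hU : ∃ w ∈ Ioo z s, M ≤ R w
  · obtain ⟨w, hw, hMw⟩ := hU
    obtain ⟨y, hzy, hyw, hMy, hbelow⟩ := exists_first_le_apply husc hlt hw.1.le hMw
    have hys : y < s := hyw.trans_lt hw.2
    refine Or.inl ⟨x, y, ⟨hxz.trans (EReal.coe_lt_coe_iff.2 hzy), Or.inr ⟨y, rfl, hys,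
      (hleM y ⟨hzy, hys⟩).trans hMx, hLM.trans hMy, fun v hxv hvy => ?_,
      fun v hyv hvs => (hleM v ⟨hzy.trans hyv, hvs⟩).trans hMy⟩⟩,
      hxz, EReal.coe_le_coe_iff.2 hzy.le, EReal.coe_lt_coe_iff.2 hys⟩
    rcases le_or_gt v z with hvz | hvz
    · exact (hleft v hxv hvz).trans_le hMy
    · exact (hbelow v hvz (EReal.coe_lt_coe_iff.1 hvy)).trans_le hMy
  · push Not at hU
    -- Otherwise `T(z)` is not attained right of `z`, which forces `T(z) = R₋(s)`.
    have hML : M ≤ leftLim R s := by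
      by_contra! hLM'
      obtain ⟨w, hw, hMw⟩ := exists_le_apply_of_leftLim_lt_supWithLeftLim husc hL hz hLM'
      rcases hw.1.eq_or_lt with rfl | hzw
      · exact hlt.not_ge hMw
      · exact (hU w ⟨hzw, hw.2⟩).not_ge hMw
    refine Or.inr ⟨x, ⟨hxz.trans (EReal.coe_lt_coe_iff.2 hz),
      Or.inl ⟨rfl, hLM.trans hMx, fun v hxv hvs => ?_⟩⟩, hxz, EReal.coe_lt_coe_iff.2 hz⟩
    rcases le_or_gt v z with hvz | hvz
    · exact (hleft v hxv hvz).trans_le hML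
    · exact (hU v ⟨hvz, hvs⟩).trans_le hML

end Islands

section HfunValues

variable {R : ℝ → ℝ} {s Rinf : ℝ}

lemma IsIsland.apply_toReal_eq (hbdd : BddAbove (R '' Iio s)) {x y : EReal}
    (hisl : IsIsland R Rinf s x y) {z : ℝ} (hxz : x < z) (hzy : (z : EReal) ≤ y)
    (hys : y < s) : R y.toReal = max (R z) (supWithLeftLim R s (Ioo z s)) := by
  obtain ⟨-, ⟨rfl, -⟩ | ⟨y, rfl, -, -, hLy, hbelow, habove⟩⟩ := hisl
  · exact absurd hys (lt_irrefl _)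
  have hzy : z ≤ y := EReal.coe_le_coe_iff.1 hzy
  have hys : y < s := EReal.coe_lt_coe_iff.1 hys
  rw [EReal.toReal_coe]
  have hTy : supWithLeftLim R s (Ioo z s) ≤ R y := by
    refine supWithLeftLim_le (nonempty_Ioo.2 (hzy.trans_lt hys)) hLy fun v hv => ?_
    rcases lt_trichotomy v y with hvy | rfl | hyv
    · exact (hbelow v (hxz.trans (EReal.coe_lt_coe_iff.2 hv.1)) (EReal.coe_lt_coe_iff.2 hvy)).le
    · exact le_rfl
    · exact habove v hyv hv.2
  rcases hzy.eq_or_lt with rfl | hzy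
  · exact (max_eq_left hTy).symm
  · refine le_antisymm ?_ (max_le (hbelow z hxz (EReal.coe_lt_coe_iff.2 hzy)).le hTy)
    exact (le_supWithLeftLim hbdd Ioo_subset_Iio_self ⟨hzy, hys⟩).trans (le_max_right _ _)

lemma IsIsland.leftLim_eq {x : EReal} (hisl : IsIsland R Rinf s x s) {z : ℝ} (hxz : x < z)
    (hz : z < s) : leftLim R s = max (R z) (supWithLeftLim R s (Ioo z s)) := by
  obtain ⟨-, ⟨-, -, hbelow⟩ | ⟨y, hy, hys, -⟩⟩ := hisl
  · refine le_antisymm (leftLim_le_supWithLeftLim.trans (le_max_right _ _))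
      (max_le (hbelow z hxz hz).le ?_)
    exact supWithLeftLim_le (nonempty_Ioo.2 hz) le_rfl fun v hv =>
      (hbelow v (hxz.trans (EReal.coe_lt_coe_iff.2 hv.1)) hv.2).le
  · exact absurd (EReal.coe_eq_coe_iff.1 hy ▸ hys) (lt_irrefl _)

lemma Hfun_coe (husc : UpperSemicontinuous R) (hL : Tendsto R (𝓝[<] s) (𝓝 (leftLim R s)))
    (hRinf : ∀ z : ℝ, z < s → R z ≤ Rinf) {z : ℝ} (hz : z < s) :
    Hfun R Rinf s z = max (R z) (supWithLeftLim R s (Ioo z s)) := by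
  unfold Hfun
  split_ifs with hii hi
  · obtain ⟨hisl, hxz, hzy, hys⟩ := hii.choose_spec.choose_spec
    exact hisl.apply_toReal_eq (bddAbove_image_Iio hRinf) hxz hzy hys
  · obtain ⟨x, hisl, hxz, -⟩ := hi
    exact hisl.leftLim_eq hxz hz
  · rw [Rval_coe, eq_comm, max_eq_left_iff]
    exact le_of_not_gt fun hlt => (exists_island husc hL hRinf hz hlt).elim hii hi

lemma Hfun_bot : Hfun R Rinf s ⊥ = Rinf := by
  simp [Hfun, Rval]

end HfunValues

section Tmap

open Real

variable {s a : ℝ}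

lemma tmap_angle_mem {x : ℝ} (hx : x < s) :
    arctan s - arctan x - π / 2 ∈ Ioo (-(π / 2)) (π / 2) := by
  have := arctan_strictMono hx
  constructor <;> linarith [arctan_lt_pi_div_two s, neg_pi_div_two_lt_arctan x]

lemma tmap_lt (ha : a < s) : tmap s a < s := by
  have h := strictMonoOn_tan (tmap_angle_mem ha)
    ⟨neg_pi_div_two_lt_arctan s, arctan_lt_pi_div_two s⟩
    (by linarith [neg_pi_div_two_lt_arctan a])
  rwa [tan_arctan] at h

lemma tmap_tmap (ha : a < s) : tmap s (tmap s a) = a := by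
  rw [tmap, tmap, arctan_tan (tmap_angle_mem ha).1 (tmap_angle_mem ha).2]
  ring_nf
  exact tan_arctan a

lemma strictAntiOn_tmap : StrictAntiOn (tmap s) (Iio s) := fun x hx y hy hxy =>
  strictMonoOn_tan (tmap_angle_mem hy) (tmap_angle_mem hx)
    (by linarith [arctan_strictMono hxy])

lemma continuousOn_tmap : ContinuousOn (tmap s) (Iio s) := fun _ hx =>
  ContinuousAt.continuousWithinAt <| ContinuousAt.comp (g := tan)
    (continuousAt_tan.2 (cos_pos_of_mem_Ioo (tmap_angle_mem hx)).ne')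
    ((continuousAt_const.sub continuous_arctan.continuousAt).sub continuousAt_const)

lemma tendsto_tmap_nhdsLT (ha : a < s) :
    Tendsto (tmap s) (𝓝[<] (tmap s a)) (𝓝[>] a) := by
  have hb := tmap_lt ha
  refine tendsto_nhdsWithin_iff.2 ⟨?_, ?_⟩
  · simpa only [tmap_tmap ha] using
      ((continuousOn_tmap.continuousAt (Iio_mem_nhds hb)).tendsto).mono_left nhdsWithin_le_nhds
  · filter_upwards [self_mem_nhdsWithin] with z (hz : z < tmap s a)
    exact tmap_tmap ha ▸ strictAntiOn_tmap (hz.trans hb) hb hz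

lemma tendsto_tmap_nhdsGT (ha : a < s) :
    Tendsto (tmap s) (𝓝[>] (tmap s a)) (𝓝[<] a) := by
  have hb := tmap_lt ha
  refine tendsto_nhdsWithin_iff.2 ⟨?_, ?_⟩
  · simpa only [tmap_tmap ha] using
      ((continuousOn_tmap.continuousAt (Iio_mem_nhds hb)).tendsto).mono_left nhdsWithin_le_nhds
  · filter_upwards [Ioo_mem_nhdsGT hb] with z hz
    exact tmap_tmap ha ▸ strictAntiOn_tmap hb hz.2 hz.1

lemma tendsto_tmap_nhdsLT_self : Tendsto (tmap s) (𝓝[<] s) atBot := by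
  refine tendsto_tan_neg_pi_div_two.comp (tendsto_nhdsWithin_iff.2 ⟨?_, ?_⟩)
  · have h : Tendsto (fun x => arctan s - arctan x - π / 2) (𝓝 s)
        (𝓝 (arctan s - arctan s - π / 2)) :=
      ((continuousAt_const.sub continuous_arctan.continuousAt).sub continuousAt_const)
    rw [sub_self, zero_sub] at h
    exact h.mono_left nhdsWithin_le_nhds
  · filter_upwards [self_mem_nhdsWithin] with z hz using (tmap_angle_mem hz).1

variable {F g : ℝ → ℝ} {c : ℝ}

lemma leftLim_eq_of_comp_tmap (hF : ∀ z < s, F z = g (tmap s z)) (ha : a < s)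
    (hg : Tendsto g (𝓝[>] a) (𝓝 c)) : leftLim F (tmap s a) = c := by
  refine leftLim_eq_of_tendsto ((hg.comp (tendsto_tmap_nhdsLT ha)).congr' ?_)
  filter_upwards [self_mem_nhdsWithin] with z (hz : z < tmap s a)
  exact (hF z (hz.trans (tmap_lt ha))).symm

lemma rightLim_eq_of_comp_tmap (hF : ∀ z < s, F z = g (tmap s z)) (ha : a < s)
    (hg : Tendsto g (𝓝[<] a) (𝓝 c)) : rightLim F (tmap s a) = c := by
  refine rightLim_eq_of_tendsto ((hg.comp (tendsto_tmap_nhdsGT ha)).congr' ?_)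
  filter_upwards [Ioo_mem_nhdsGT (tmap_lt ha)] with z hz
  exact (hF z hz.2).symm

lemma leftLim_self_eq_of_comp_tmap (hF : ∀ z < s, F z = g (tmap s z))
    (hg : Tendsto g atBot (𝓝 c)) : leftLim F s = c := by
  refine leftLim_eq_of_tendsto ((hg.comp tendsto_tmap_nhdsLT_self).congr' ?_)
  filter_upwards [self_mem_nhdsWithin] with z hz
  exact (hF z hz).symm

lemma tE_coe_of_lt {z : ℝ} (hz : z < s) : tE s z = (tmap s z : EReal) := by
  simp [tE, hz.ne]

lemma tE_self : tE s s = ⊥ := by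
  simp [tE]

end Tmap

section Bprime

variable {R : ℝ → ℝ} {s Rinf : ℝ} (husc : UpperSemicontinuous R)
  (hL : Tendsto R (𝓝[<] s) (𝓝 (leftLim R s))) (hRinf : ∀ z : ℝ, z < s → R z ≤ Rinf)
include husc hL hRinf

lemma RtildeE_coe {a : ℝ} (ha : a < s) :
    RtildeE R Rinf s a =
      max (R a) (supWithLeftLim R s (Ioo a s)) + supWithLeftLim R s (Ioo a s) - R a := by
  have hbdd : BddAbove (R '' Iio s) := bddAbove_image_Iio hRinf
  have hH : HplusE R Rinf s a = supWithLeftLim R s (Ioo a s) := by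
    rw [HplusE, if_neg (EReal.coe_ne_bot a), EReal.toReal_coe]
    refine rightLim_eq_of_tendsto ((tendsto_max_supWithLeftLim_Ioo_nhdsGT hbdd ha).congr' ?_)
    filter_upwards [Ioo_mem_nhdsGT ha] with w hw
    exact (Hfun_coe husc hL hRinf hw.2).symm
  rw [RtildeE, Hfun_coe husc hL hRinf ha, hH, Rval_coe]

lemma RtildeE_bot : RtildeE R Rinf s ⊥ = supWithLeftLim R s (Iio s) := by
  have hbdd : BddAbove (R '' Iio s) := bddAbove_image_Iio hRinf
  have hH : HplusE R Rinf s ⊥ = supWithLeftLim R s (Iio s) := by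
    rw [HplusE, if_pos rfl]
    refine ((tendsto_max_supWithLeftLim_Ioo_atBot hbdd).congr' ?_).limUnder_eq
    filter_upwards [eventually_lt_atBot s] with w hw
    exact (Hfun_coe husc hL hRinf hw).symm
  rw [RtildeE, Hfun_bot, hH, Rval, if_pos rfl]
  ring

lemma Bprime_eq_of_lt {z : ℝ} (hz : z < s) :
    Bprime R Rinf s z = max (R (tmap s z)) (supWithLeftLim R s (Ioo (tmap s z) s)) +
      supWithLeftLim R s (Ioo (tmap s z) s) - R (tmap s z) := by
  rw [Bprime, tE_coe_of_lt hz, RtildeE_coe husc hL hRinf (tmap_lt hz)]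

end Bprime

section Minimality

variable {R : ℝ → ℝ} {s Rinf : ℝ} (hL : ∀ a, Tendsto R (𝓝[<] a) (𝓝 (leftLim R a)))
  (hR : ∀ a, Tendsto R (𝓝[>] a) (𝓝 (rightLim R a))) (hmax : MaxEqSelf R)
  (hRinf : ∀ z : ℝ, z < s → R z ≤ Rinf)
include hL hR hmax hRinf

lemma Bprime_tmap_le_leftLim {a : ℝ} (ha : a < s) :
    Bprime R Rinf s (tmap s a) ≤ leftLim (Bprime R Rinf s) (tmap s a) := by
  have husc := upperSemicontinuous_of_maxEqSelf hL hR hmax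
  have hbdd : BddAbove (R '' Iio s) := bddAbove_image_Iio hRinf
  set T := supWithLeftLim R s (Ioo a s)
  have hlim : leftLim (Bprime R Rinf s) (tmap s a) = T + T - rightLim R a :=
    leftLim_eq_of_comp_tmap (fun z hz => Bprime_eq_of_lt husc (hL s) hRinf hz) ha
      (((tendsto_max_supWithLeftLim_Ioo_nhdsGT hbdd ha).add
        (tendsto_supWithLeftLim_Ioo_nhdsGT hbdd ha)).sub (hR a))
  have hRT : rightLim R a ≤ T := le_of_tendsto (hR a) <| by
    filter_upwards [Ioo_mem_nhdsGT ha] with w hw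
    exact le_supWithLeftLim hbdd Ioo_subset_Iio_self hw
  rw [Bprime_eq_of_lt husc (hL s) hRinf (tmap_lt ha), tmap_tmap ha, hlim]
  rcases le_total (R a) T with h | h
  · linarith [max_eq_right h, (hmax a).2]
  · linarith [max_eq_left h]

lemma Bprime_tmap_le_rightLim {a : ℝ} (ha : a < s) :
    Bprime R Rinf s (tmap s a) ≤ rightLim (Bprime R Rinf s) (tmap s a) := by
  have husc := upperSemicontinuous_of_maxEqSelf hL hR hmax
  have hbdd : BddAbove (R '' Iio s) := bddAbove_image_Iio hRinf
  set T := supWithLeftLim R s (Ioo a s)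
  have hlim : rightLim (Bprime R Rinf s) (tmap s a) = max (R a) T + max (R a) T - leftLim R a :=
    rightLim_eq_of_comp_tmap (fun z hz => Bprime_eq_of_lt husc (hL s) hRinf hz) ha
      (((tendsto_max_supWithLeftLim_Ioo_nhdsLT hbdd husc ha).add
        (tendsto_supWithLeftLim_Ioo_nhdsLT hbdd husc ha)).sub (hL a))
  rw [Bprime_eq_of_lt husc (hL s) hRinf (tmap_lt ha), tmap_tmap ha, hlim]
  linarith [le_max_right (R a) T, (hmax a).1]

lemma Bprime_self_le_leftLim {r : ℝ} (hr : Tendsto R atBot (𝓝 r)) :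
    Bprime R Rinf s s ≤ leftLim (Bprime R Rinf s) s := by
  have husc := upperSemicontinuous_of_maxEqSelf hL hR hmax
  have hbdd : BddAbove (R '' Iio s) := bddAbove_image_Iio hRinf
  set C := supWithLeftLim R s (Iio s)
  have hlim : leftLim (Bprime R Rinf s) s = C + C - r :=
    leftLim_self_eq_of_comp_tmap (fun z hz => Bprime_eq_of_lt husc (hL s) hRinf hz)
      (((tendsto_max_supWithLeftLim_Ioo_atBot hbdd).add
        (tendsto_supWithLeftLim_Ioo_atBot hbdd)).sub hr)
  have hrC : r ≤ C := le_of_tendsto hr <| by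
    filter_upwards [eventually_lt_atBot s] with w hw
    exact le_supWithLeftLim hbdd subset_rfl hw
  rw [Bprime, tE_self, RtildeE_bot husc (hL s) hRinf, hlim]
  linarith

end Minimality

/-- Lemma 3.9:  for `a ∈ (-∞, s)` and `b = 𝔱(a) ∈ (-∞, s)` we have
`B'(b) - B'₋(b) ≤ 0` and `B'₊(b) - B'(b) ≥ 0`; in particular
`B'(b) = min {B'(b), B'₋(b), B'₊(b)}`.  Moreover for `b = s = 𝔱(-∞)`,
`B'(s) - B'₋(s) ≤ 0`. -/
theorem Bprime_is_min (R f um up : ℝ → ℝ) (h : IsUseful R f um up)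
    (hmax : MaxEqSelf R) (s Rinf : ℝ) (hRinf : ∀ z : ℝ, z < s → R z ≤ Rinf) :
    (∀ a : ℝ, a < s →
      Bprime R Rinf s (tmap s a) - Function.leftLim (Bprime R Rinf s) (tmap s a) ≤ 0 ∧
      0 ≤ Function.rightLim (Bprime R Rinf s) (tmap s a) - Bprime R Rinf s (tmap s a) ∧
      Bprime R Rinf s (tmap s a) =
        min (Bprime R Rinf s (tmap s a))
          (min (Function.leftLim (Bprime R Rinf s) (tmap s a))
            (Function.rightLim (Bprime R Rinf s) (tmap s a)))) ∧
    Bprime R Rinf s s - Function.leftLim (Bprime R Rinf s) s ≤ 0 := by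
  have hL := h.tendsto_leftLim
  have hR := h.tendsto_rightLim
  obtain ⟨r, hr⟩ := h.exists_tendsto_atBot
  refine ⟨fun a ha => ?_, sub_nonpos.2 (Bprime_self_le_leftLim hL hR hmax hRinf hr)⟩
  have hleft := Bprime_tmap_le_leftLim hL hR hmax hRinf ha
  have hright := Bprime_tmap_le_rightLim hL hR hmax hRinf ha
  exact ⟨sub_nonpos.2 hleft, sub_nonneg.2 hright, (min_eq_left (le_min hleft hright)).symm⟩

end
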